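/- Let S_λ be a nonzero formally normal weighted shift on a directed tree T with weights {λ_v}_{v∈V°}. Then sup_{v∈V} ‖S_λ e_v‖ < ∞, so S_λ is a bounded operator on ℓ²(V); moreover S_λ is normal. -/

import Mathlib

open scoped ENNReal ComplexConjugate Classical

/-- A directed tree: a connected directed graph with no (directed) circuits in which
every vertex has at most one parent and at most one vertex has no parent (the root). -/
structure DirectedTree (V : Type*) where
  E : V → V → Prop
  parent_unique : ∀ ⦃u₁ u₂ v : V⦄, E u₁ v → E u₂ v → u₁ = u₂
  no_circuit : ∀ v : V, ¬ Relation.TransGen E v v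
  connected : ∀ u v : V, Relation.ReflTransGen (fun a b => E a b ∨ E b a) u v
  root_unique : ∀ ⦃r₁ r₂ : V⦄, (∀ u, ¬ E u r₁) → (∀ u, ¬ E u r₂) → r₁ = r₂

namespace DirectedTree

variable {V : Type*} (T : DirectedTree V)

/-- `v ∈ V°`, i.e. `v` is not a root. -/
def HasParent (v : V) : Prop := ∃ u, T.E u v

/-- The parent partial map (junk value `v` itself at a root). -/
noncomputable def par (v : V) : V := if h : T.HasParent v then h.choose else v

theorem par_spec {v : V} (h : T.HasParent v) : T.E (T.par v) v := by
  rw [par, dif_pos h]; exact h.choose_spec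

/-- the child set of a vertex -/
def chi (u : V) : Set V := {v | T.E u v}

/-- the child set of a set of vertices -/
def chiSet (W : Set V) : Set V := {v | ∃ u ∈ W, T.E u v}

/-- the iterated child set `Chi^n(u)` -/
def chiN (n : ℕ) (u : V) : Set V := (T.chiSet)^[n] {u}

/-- the set of descendants of a vertex -/
def des (u : V) : Set V := ⋃ n : ℕ, T.chiN n u

/-- the iterated parent partial map, as an `Option`-valued map -/
noncomputable def parN : ℕ → V → Option V
  | 0, v => some v
  | n + 1, v => if T.HasParent v then parN n (T.par v) else none

end DirectedTree

/-- the Hilbert space `ℓ²(V)` -/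
abbrev l2 (V : Type*) : Type _ := lp (fun _ : V => ℂ) 2

/-- the canonical orthonormal basis vector `e_u` of `ℓ²(V)` -/
noncomputable def evec {V : Type*} (u : V) : l2 V := lp.single 2 u 1

variable {V : Type*}

/-- the formal action `Λ_T` of a weighted shift with weights `lam` -/
noncomputable def lamMap (T : DirectedTree V) (lam : V → ℂ) (f : V → ℂ) : V → ℂ :=
  fun v => if T.HasParent v then lam v * f (T.par v) else 0

theorem lamMap_add (T : DirectedTree V) (lam : V → ℂ) (f g : V → ℂ) :
    lamMap T lam (f + g) = lamMap T lam f + lamMap T lam g := by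
  funext v
  simp only [lamMap, Pi.add_apply]
  split_ifs <;> ring

theorem lamMap_smul (T : DirectedTree V) (lam : V → ℂ) (c : ℂ) (f : V → ℂ) :
    lamMap T lam (c • f) = c • lamMap T lam f := by
  funext v
  simp only [lamMap, Pi.smul_apply, smul_eq_mul]
  split_ifs <;> ring

/-- the (maximal) domain of the weighted shift `S_lam` -/
noncomputable def shiftDomain (T : DirectedTree V) (lam : V → ℂ) : Submodule ℂ (l2 V) where
  carrier := {f : l2 V | Memℓp (lamMap T lam ⇑f) 2}
  zero_mem' := by
    have : lamMap T lam ⇑(0 : l2 V) = 0 := by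
      funext v; simp [lamMap]
    simp only [Set.mem_setOf_eq, this]
    exact zero_memℓp
  add_mem' := by
    intro f g hf hg
    have h : lamMap T lam ⇑(f + g) = lamMap T lam ⇑f + lamMap T lam ⇑g := by
      rw [lp.coeFn_add]; exact lamMap_add T lam _ _
    simp only [Set.mem_setOf_eq, h]
    exact hf.add hg
  smul_mem' := by
    intro c f hf
    have h : lamMap T lam ⇑(c • f) = c • lamMap T lam ⇑f := by
      rw [lp.coeFn_smul]; exact lamMap_smul T lam _ _
    simp only [Set.mem_setOf_eq, h]
    exact hf.const_smul c

/-- the weighted shift `S_lam` on the directed tree `T`, as an unbounded operator in `ℓ²(V)` -/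
noncomputable def shift (T : DirectedTree V) (lam : V → ℂ) : l2 V →ₗ.[ℂ] l2 V where
  domain := shiftDomain T lam
  toFun :=
    { toFun := fun f => ⟨lamMap T lam ⇑(f : l2 V), f.2⟩
      map_add' := by
        intro f g
        apply Subtype.ext
        exact lamMap_add T lam _ _
      map_smul' := by
        intro c f
        apply Subtype.ext
        exact lamMap_smul T lam _ _ }
/-- A densely defined operator `A` is formally normal if `dom A ⊆ dom A*` and
`‖A* h‖ = ‖A h‖` for all `h ∈ dom A`. -/
def FormallyNormal {H : Type*} [NormedAddCommGroup H] [InnerProductSpace ℂ H]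
    [CompleteSpace H] (A : H →ₗ.[ℂ] H) : Prop :=
  Dense (A.domain : Set H) ∧ A.domain ≤ A.adjoint.domain ∧
    ∀ (f : H) (hf : f ∈ A.domain) (hf' : f ∈ A.adjoint.domain),
      ‖A.adjoint ⟨f, hf'⟩‖ = ‖A ⟨f, hf⟩‖

/-- A densely defined operator `A` is normal if `dom A = dom A*` and
`‖A* h‖ = ‖A h‖` for all `h ∈ dom A` (such an operator is automatically closed). -/
def IsNormalOp {H : Type*} [NormedAddCommGroup H] [InnerProductSpace ℂ H]
    [CompleteSpace H] (A : H →ₗ.[ℂ] H) : Prop :=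
  Dense (A.domain : Set H) ∧ A.domain = A.adjoint.domain ∧
    ∀ (f : H) (hf : f ∈ A.domain) (hf' : f ∈ A.adjoint.domain),
      ‖A.adjoint ⟨f, hf'⟩‖ = ‖A ⟨f, hf⟩‖

/-!
Formal normality tested on a basis vector gives `‖S e_v‖ = ‖S* e_v‖ = |λ_v|` (`0` at the root),
where `S e_v = ∑_{x ∈ Chi(v)} λ_x e_x` and `S* e_v = conj λ_v e_{par v}`. Polarized on two siblings
`u ≠ w` it gives `λ_u conj λ_w = ⟪S* e_u, S* e_w⟫ = ⟪S e_u, S e_w⟫ = 0`. Hence every vertex has at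
most one child of nonzero weight, and that weight has the modulus of the parent's weight; as any two
vertices have a common ancestor, all nonzero weights share one modulus `c`. So `S` re-indexes `f`
injectively along the parent map and multiplies it by weights of modulus `c`: it is defined on all
of `ℓ²(V)` with `‖S f‖ ≤ c ‖f‖`, and a bounded operator with `‖S* f‖ = ‖S f‖` is normal.
-/

open scoped InnerProductSpace

theorem LinearMap.inner_map_map_eq_of_forall_norm_eq {M H : Type*} [AddCommGroup M]
    [Module ℂ M] [NormedAddCommGroup H] [InnerProductSpace ℂ H] (A B : M →ₗ[ℂ] H)
    (h : ∀ x, ‖A x‖ = ‖B x‖) (x y : M) : ⟪A x, A y⟫_ℂ = ⟪B x, B y⟫_ℂ := by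
  simp only [inner_eq_sum_norm_sq_div_four (𝕜 := ℂ), ← map_add, ← map_sub, ← map_smul, h]

theorem LinearPMap.exists_continuousLinearMap_of_domain_eq_top {E F : Type*}
    [NormedAddCommGroup E] [NormedSpace ℂ E] [NormedAddCommGroup F] [NormedSpace ℂ F]
    {A : E →ₗ.[ℂ] F} (hA : A.domain = ⊤) {C : ℝ} (hC : ∀ f : A.domain, ‖A f‖ ≤ C * ‖f‖) :
    ∃ N : E →L[ℂ] F, ∀ f : A.domain, N f = A f :=
  ⟨(A.toFun ∘ₗ (LinearEquiv.ofTop _ hA).symm.toLinearMap).mkContinuous C fun _ => hC _,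
    fun _ => rfl⟩

namespace FormallyNormal

variable {H : Type*} [NormedAddCommGroup H] [InnerProductSpace ℂ H] [CompleteSpace H]
  {A : H →ₗ.[ℂ] H}

theorem inner_adjoint_eq (hA : FormallyNormal A) {f g : H} (hf : f ∈ A.domain)
    (hg : g ∈ A.domain) (hf' : f ∈ A.adjoint.domain) (hg' : g ∈ A.adjoint.domain) :
    ⟪A.adjoint ⟨f, hf'⟩, A.adjoint ⟨g, hg'⟩⟫_ℂ = ⟪A ⟨f, hf⟩, A ⟨g, hg⟩⟫_ℂ :=
  LinearMap.inner_map_map_eq_of_forall_norm_eq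
    (A.adjoint.toFun ∘ₗ Submodule.inclusion hA.2.1) A.toFun
    (fun f => hA.2.2 f f.2 _) ⟨f, hf⟩ ⟨g, hg⟩

theorem isStarNormal_of_extends (hA : FormallyNormal A) (N : H →L[ℂ] H)
    (hN : ∀ f : A.domain, N f = A f) : IsStarNormal N := by
  have hadj : ∀ (f : H) (hf : f ∈ A.adjoint.domain), A.adjoint ⟨f, hf⟩ = N.adjoint f :=
    fun f hf => LinearPMap.adjoint_apply_eq hA.1 _ fun g => by
      rw [ContinuousLinearMap.adjoint_inner_left, hN]
  rw [ContinuousLinearMap.isStarNormal_iff_norm_eq_adjoint]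
  refine congrFun (Continuous.ext_on hA.1 (by fun_prop) (by fun_prop) fun f hf => ?_)
  rw [← hadj f (hA.2.1 hf), hN ⟨f, hf⟩, hA.2.2 f hf]

end FormallyNormal

namespace DirectedTree

variable (T : DirectedTree V)

theorem par_eq_of_edge {p u : V} (h : T.E p u) : T.par u = p :=
  T.parent_unique (T.par_spec ⟨p, h⟩) h

theorem exists_common_ancestor (u w : V) :
    ∃ z, Relation.ReflTransGen T.E z u ∧ Relation.ReflTransGen T.E z w := by
  induction T.connected u w with
  | refl => exact ⟨u, .refl, .refl⟩
  | @tail b c _ hbc ih =>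
    obtain ⟨z, hzu, hzb⟩ := ih
    rcases hbc with hbc | hcb
    · exact ⟨z, hzu, hzb.tail hbc⟩
    -- the parent `c` of `b` lies on the path from `z` to `b`, unless `z = b`
    rcases hzb.cases_tail with rfl | ⟨d, hzd, hdb⟩
    · exact ⟨c, hzu.head hcb, .refl⟩
    · exact ⟨z, hzu, T.parent_unique hdb hcb ▸ hzd⟩

end DirectedTree

section WeightedShift

variable {T : DirectedTree V} {lam : V → ℂ}

def weightSupport (T : DirectedTree V) (lam : V → ℂ) : Set V :=
  {v | T.HasParent v ∧ lam v ≠ 0}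

theorem inner_evec_left (v : V) (f : l2 V) : ⟪evec v, f⟫_ℂ = f v := by
  simp [evec, lp.inner_single_left]

theorem evec_apply (u v : V) : evec u v = if v = u then 1 else 0 := by
  simp [evec, lp.single_apply, Pi.single_apply]

theorem norm_evec (v : V) : ‖evec v‖ = 1 := by
  simp [evec, lp.norm_single]

theorem lamMap_of_edge {p x : V} (h : T.E p x) (f : V → ℂ) :
    lamMap T lam f x = lam x * f p := by
  rw [lamMap, if_pos ⟨p, h⟩, T.par_eq_of_edge h]

theorem lamMap_eq_zero_of_not_mem_weightSupport {x : V} (hx : x ∉ weightSupport T lam)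
    (f : V → ℂ) : lamMap T lam f x = 0 := by
  by_cases hp : T.HasParent x
  · rw [lamMap, if_pos hp, not_and_not_right.1 hx hp, zero_mul]
  · rw [lamMap, if_neg hp]

theorem lamMap_evec_apply (u x : V) :
    lamMap T lam (evec u) x = if T.E u x then lam x else 0 := by
  split_ifs with h
  · rw [lamMap_of_edge h, evec_apply, if_pos rfl, mul_one]
  · by_cases hp : T.HasParent x
    · have hpar : T.par x ≠ u := fun hpu => h (hpu ▸ T.par_spec hp)
      rw [lamMap, if_pos hp, evec_apply, if_neg hpar, mul_zero]
    · rw [lamMap, if_neg hp]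

theorem coe_shift_apply (f : (shift T lam).domain) :
    ⇑(shift T lam f : l2 V) = lamMap T lam f := rfl

theorem evec_mem_shift_domain (hd : Dense ((shift T lam).domain : Set (l2 V))) (v : V) :
    evec v ∈ (shift T lam).domain := by
  obtain ⟨f, hf, hfv⟩ : ∃ f ∈ (shift T lam).domain, f v ≠ 0 := by
    by_contra! h
    have := hd.eq_zero_of_inner_left ℂ fun f hf => (inner_evec_left v f).trans (h f hf)
    simpa [this] using norm_evec v
  -- on the children of `v`, `S e_v` is `S f` divided by `f v`
  refine (Memℓp.const_mul hf (f v)⁻¹).mono' fun x => ?_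
  rw [lamMap_evec_apply]
  split_ifs with h
  · rw [lamMap_of_edge h, mul_left_comm, inv_mul_cancel₀ hfv, mul_one]
  · rw [norm_zero]; positivity

noncomputable def adjointEvec (T : DirectedTree V) (lam : V → ℂ) (v : V) : l2 V :=
  if T.HasParent v then conj (lam v) • evec (T.par v) else 0

theorem inner_adjointEvec_left (v : V) (f : (shift T lam).domain) :
    ⟪adjointEvec T lam v, (f : l2 V)⟫_ℂ = ⟪evec v, (shift T lam f : l2 V)⟫_ℂ := by
  rw [inner_evec_left, coe_shift_apply, adjointEvec, lamMap]
  split_ifs with h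
  · rw [inner_smul_left, inner_evec_left, Complex.conj_conj]
  · rw [inner_zero_left]

theorem evec_mem_shift_adjoint_domain (v : V) : evec v ∈ (shift T lam).adjoint.domain :=
  LinearPMap.mem_adjoint_domain_of_exists _ ⟨_, inner_adjointEvec_left v⟩

theorem shift_adjoint_evec (hd : Dense ((shift T lam).domain : Set (l2 V))) (v : V)
    (hv : evec v ∈ (shift T lam).adjoint.domain) :
    (shift T lam).adjoint ⟨evec v, hv⟩ = adjointEvec T lam v :=
  LinearPMap.adjoint_apply_eq hd _ (inner_adjointEvec_left v)

theorem norm_adjointEvec (v : V) :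
    ‖adjointEvec T lam v‖ = if T.HasParent v then ‖lam v‖ else 0 := by
  unfold adjointEvec
  split_ifs <;> simp [norm_smul, norm_evec]

namespace FormallyNormal

theorem norm_shift_evec (hfn : FormallyNormal (shift T lam)) (v : V) :
    ‖shift T lam ⟨evec v, evec_mem_shift_domain hfn.1 v⟩‖ =
      if T.HasParent v then ‖lam v‖ else 0 := by
  rw [← hfn.2.2 _ _ (evec_mem_shift_adjoint_domain v), shift_adjoint_evec hfn.1,
    norm_adjointEvec]

theorem lam_eq_zero_or_of_siblings (hfn : FormallyNormal (shift T lam)) {p u w : V}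
    (hu : T.E p u) (hw : T.E p w) (huw : u ≠ w) :
    lam u = 0 ∨ lam w = 0 := by
  -- `S* e_u` and `S* e_w` are both multiples of `e_p`, while `S e_u ⊥ S e_w`
  have hdu := evec_mem_shift_domain hfn.1 u
  have hdw := evec_mem_shift_domain hfn.1 w
  have hinner := hfn.inner_adjoint_eq hdu hdw (evec_mem_shift_adjoint_domain u)
    (evec_mem_shift_adjoint_domain w)
  have hS : ⟪shift T lam ⟨evec u, hdu⟩, shift T lam ⟨evec w, hdw⟩⟫_ℂ = 0 := by
    rw [lp.inner_eq_tsum]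
    refine (tsum_congr fun x => ?_).trans tsum_zero
    simp only [coe_shift_apply, lamMap_evec_apply]
    split_ifs with hux hwx
    · exact absurd (T.parent_unique hux hwx) huw
    all_goals simp
  have hSadj : ⟪adjointEvec T lam u, adjointEvec T lam w⟫_ℂ = lam u * conj (lam w) := by
    rw [adjointEvec, adjointEvec, if_pos ⟨p, hu⟩, if_pos ⟨p, hw⟩, T.par_eq_of_edge hu,
      T.par_eq_of_edge hw, inner_smul_left, inner_smul_right, inner_evec_left, evec_apply,
      if_pos rfl, Complex.conj_conj, mul_one]
  rw [shift_adjoint_evec hfn.1, shift_adjoint_evec hfn.1, hSadj, hS] at hinner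
  simpa using hinner

theorem injOn_par_weightSupport (hfn : FormallyNormal (shift T lam)) :
    Set.InjOn T.par (weightSupport T lam) := by
  intro x hx y hy hxy
  by_contra hne
  rcases hfn.lam_eq_zero_or_of_siblings (T.par_spec hx.1) (hxy ▸ T.par_spec hy.1) hne with h | h
  exacts [hx.2 h, hy.2 h]

theorem par_mem_weightSupport_and_norm_eq (hfn : FormallyNormal (shift T lam)) {v : V}
    (hv : v ∈ weightSupport T lam) :
    T.par v ∈ weightSupport T lam ∧ ‖lam (T.par v)‖ = ‖lam v‖ := by
  set p := T.par v
  -- by the sibling lemma, `v` is the only child of `p` with nonzero weight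
  have hSp : shift T lam ⟨evec p, evec_mem_shift_domain hfn.1 p⟩ = lam v • evec v := by
    ext x
    rw [coe_shift_apply, lamMap_evec_apply, lp.coeFn_smul, Pi.smul_apply, evec_apply]
    split_ifs with hpx hxv hxv
    · rw [hxv, smul_eq_mul, mul_one]
    · rw [smul_zero]
      exact (hfn.lam_eq_zero_or_of_siblings hpx (T.par_spec hv.1) hxv).resolve_right hv.2
    · exact absurd (hxv ▸ T.par_spec hv.1) hpx
    · rw [smul_zero]
  have hnorm := hfn.norm_shift_evec p
  rw [hSp, norm_smul, norm_evec, mul_one] at hnorm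
  have hlam : ‖lam v‖ ≠ 0 := norm_ne_zero_iff.2 hv.2
  have hp : T.HasParent p := by
    by_contra hp
    rw [if_neg hp] at hnorm
    exact hlam hnorm
  rw [if_pos hp] at hnorm
  exact ⟨⟨hp, norm_ne_zero_iff.1 (hnorm ▸ hlam)⟩, hnorm.symm⟩

theorem ancestor_mem_weightSupport_and_norm_eq (hfn : FormallyNormal (shift T lam)) {z u : V}
    (h : Relation.ReflTransGen T.E z u) (hu : u ∈ weightSupport T lam) :
    z ∈ weightSupport T lam ∧ ‖lam z‖ = ‖lam u‖ := by
  induction h using Relation.ReflTransGen.head_induction_on with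
  | refl => exact ⟨hu, rfl⟩
  | head hzc _ ih =>
    have := hfn.par_mem_weightSupport_and_norm_eq ih.1
    rw [T.par_eq_of_edge hzc] at this
    exact ⟨this.1, this.2.trans ih.2⟩

theorem exists_norm_lam_eq_on_weightSupport (hfn : FormallyNormal (shift T lam)) :
    ∃ c ≥ (0 : ℝ), ∀ x ∈ weightSupport T lam, ‖lam x‖ = c := by
  rcases (weightSupport T lam).eq_empty_or_nonempty with h | ⟨u, hu⟩
  · exact ⟨0, le_rfl, by simp [h]⟩
  refine ⟨‖lam u‖, norm_nonneg _, fun w hw => ?_⟩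
  obtain ⟨z, hzw, hzu⟩ := T.exists_common_ancestor w u
  rw [← (hfn.ancestor_mem_weightSupport_and_norm_eq hzw hw).2,
    (hfn.ancestor_mem_weightSupport_and_norm_eq hzu hu).2]

end FormallyNormal

theorem sum_norm_sq_le_norm_sq (f : l2 V) (s : Finset V) : ∑ i ∈ s, ‖f i‖ ^ 2 ≤ ‖f‖ ^ 2 := by
  simpa using lp.sum_rpow_le_norm_rpow (p := 2) (by norm_num) f s

theorem sum_norm_lamMap_sq_le (hinj : Set.InjOn T.par (weightSupport T lam)) {c : ℝ}
    (hc : ∀ x ∈ weightSupport T lam, ‖lam x‖ ≤ c) (f : l2 V) (s : Finset V) :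
    ∑ x ∈ s, ‖lamMap T lam f x‖ ^ 2 ≤ (c * ‖f‖) ^ 2 := by
  set t := s.filter (· ∈ weightSupport T lam)
  calc ∑ x ∈ s, ‖lamMap T lam f x‖ ^ 2 ≤ ∑ x ∈ t, c ^ 2 * ‖f (T.par x)‖ ^ 2 := by
        rw [Finset.sum_filter]
        refine Finset.sum_le_sum fun x _ => ?_
        split_ifs with hx
        · rw [lamMap, if_pos hx.1, norm_mul, mul_pow]
          gcongr
          exact hc x hx
        · rw [lamMap_eq_zero_of_not_mem_weightSupport hx, norm_zero, zero_pow two_ne_zero]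
    _ = c ^ 2 * ∑ v ∈ t.image T.par, ‖f v‖ ^ 2 := by
        rw [Finset.sum_image (hinj.mono fun x hx => (Finset.mem_filter.1 hx).2), Finset.mul_sum]
    _ ≤ c ^ 2 * ‖f‖ ^ 2 := by gcongr; exact sum_norm_sq_le_norm_sq f _
    _ = (c * ‖f‖) ^ 2 := by ring

theorem shift_domain_eq_top (hinj : Set.InjOn T.par (weightSupport T lam)) {c : ℝ}
    (hc : ∀ x ∈ weightSupport T lam, ‖lam x‖ ≤ c) : (shift T lam).domain = ⊤ :=
  eq_top_iff.2 fun f _ => memℓp_gen' fun s => by simpa using sum_norm_lamMap_sq_le hinj hc f s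

theorem norm_shift_le (hinj : Set.InjOn T.par (weightSupport T lam)) {c : ℝ} (hc0 : 0 ≤ c)
    (hc : ∀ x ∈ weightSupport T lam, ‖lam x‖ ≤ c) (f : (shift T lam).domain) :
    ‖shift T lam f‖ ≤ c * ‖f‖ :=
  lp.norm_le_of_forall_sum_le (by norm_num) (by positivity) fun s => by
    simpa [coe_shift_apply] using sum_norm_lamMap_sq_le hinj hc f s

end WeightedShift

theorem formallyNormal_implies_bounded_normal_general {V : Type*} (T : DirectedTree V) (lam : V → ℂ)
    (hfn : FormallyNormal (shift T lam)) :
    (∃ C : ℝ, ∀ (v : V) (hv : evec v ∈ (shift T lam).domain),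
        ‖shift T lam ⟨evec v, hv⟩‖ ≤ C) ∧
    (shift T lam).domain = ⊤ ∧
    ∃ N : l2 V →L[ℂ] l2 V,
      (∀ f : (shift T lam).domain, N (f : l2 V) = shift T lam f) ∧ IsStarNormal N := by
  obtain ⟨c, hc0, hc⟩ := hfn.exists_norm_lam_eq_on_weightSupport
  have hbound : ∀ x ∈ weightSupport T lam, ‖lam x‖ ≤ c := fun x hx => (hc x hx).le
  have hinj := hfn.injOn_par_weightSupport
  have hnorm := norm_shift_le hinj hc0 hbound
  have hdom := shift_domain_eq_top hinj hbound
  obtain ⟨N, hN⟩ := LinearPMap.exists_continuousLinearMap_of_domain_eq_top hdom hnorm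
  refine ⟨⟨c, fun v hv => ?_⟩, hdom, N, hN, hfn.isStarNormal_of_extends N hN⟩
  simpa [norm_evec] using hnorm ⟨evec v, hv⟩

/-- a nonzero formally normal weighted shift on a directed tree satisfies
`sup_v ‖S_λ e_v‖ < ∞`, is bounded on all of `ℓ²(V)`, and is normal. -/
theorem formallyNormal_implies_bounded_normal {V : Type*} (T : DirectedTree V) (lam : V → ℂ)
    (hfn : FormallyNormal (shift T lam))
    (hnz : ∃ f : (shift T lam).domain, shift T lam f ≠ 0) :
    (∃ C : ℝ, ∀ (v : V) (hv : evec v ∈ (shift T lam).domain),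
        ‖shift T lam ⟨evec v, hv⟩‖ ≤ C) ∧
    (shift T lam).domain = ⊤ ∧
    ∃ N : l2 V →L[ℂ] l2 V,
      (∀ f : (shift T lam).domain, N (f : l2 V) = shift T lam f) ∧ IsStarNormal N :=
  formallyNormal_implies_bounded_normal_general T lam hfn
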